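/- (Lemma on saddle point systems, dual part.) For every vector g ∈ ℝ^{r·n_v}, the vector w̄ := (I_r ⊗ φ_l) · (𝒳ᵀ)⁻¹ · (I_r ⊗ θ_rᵀ) · g solves the dual saddle point problem: there exists ξ_w ∈ ℝ^{r·n_p} such that 𝒯ᵀ w̄ + (I_r ⊗ A21ᵀ) ξ_w = g and (I_r ⊗ A12ᵀ) w̄ = 0. -/

import Mathlib

/-!
Null-space method. With `S = 𝒯ᵀ`, `Φ = I ⊗ φ_l` and `Ψ = I ⊗ θ_rᵀ` we have `Ψ S Φ = 𝒳ᵀ`, so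
`w̄ = Φ (Ψ S Φ)⁻¹ Ψ g` satisfies `Ψ (g - S w̄) = 0`. The residual therefore lies in
`ker Ψ ⊆ range (I ⊗ A21ᵀ)`, which produces `ξ_w`, while `(I ⊗ A12ᵀ) Φ = I ⊗ (φ_lᵀ A12)ᵀ = 0`.
-/

open Matrix Kronecker

namespace Matrix

variable {R : Type*} [CommRing R] {ι l m n p k : Type*}

theorem ker_one_kronecker_le_range [Fintype ι] [DecidableEq ι] [Fintype n] [Fintype p]
    {M : Matrix m n R} {N : Matrix n p R}
    (h : LinearMap.ker M.mulVecLin ≤ LinearMap.range N.mulVecLin) :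
    LinearMap.ker ((1 : Matrix ι ι R) ⊗ₖ M).mulVecLin ≤
      LinearMap.range ((1 : Matrix ι ι R) ⊗ₖ N).mulVecLin := by
  intro v hv
  -- the blocks of `vec V` are the columns of `V`, and `(1 ⊗ M) *ᵥ vec V = vec (M * V)`
  obtain ⟨V, rfl⟩ := vec_bijective.surjective v
  rw [LinearMap.mem_ker, mulVecLin_apply, ← vec_mul_eq_mulVec, ← vec_zero, vec_inj] at hv
  have hcol : ∀ i, ∃ x, N *ᵥ x = Vᵀ i := fun i ↦ h <| by
    rw [LinearMap.mem_ker, mulVecLin_apply, ← vecMul_transpose, ← mul_apply_eq_vecMul,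
      ← transpose_mul, hv, transpose_zero]
    rfl
  choose ξ hξ using hcol
  refine ⟨vec ξᵀ, ?_⟩
  rw [mulVecLin_apply, ← vec_mul_eq_mulVec]
  congr 1
  ext j i
  rw [← transpose_apply V, ← hξ i]
  rfl

theorem exists_saddle_point_solution_of_nullspace [Fintype m] [Fintype n] [Fintype k]
    [DecidableEq k] {S : Matrix m m R} {B : Matrix m n R} {C : Matrix l m R}
    {Φ : Matrix m k R} {Ψ : Matrix k m R} (hC : C * Φ = 0)
    (hΨ : LinearMap.ker Ψ.mulVecLin ≤ LinearMap.range B.mulVecLin)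
    (hdet : IsUnit (Ψ * S * Φ).det) (g : m → R) :
    ∃ ξ : n → R, S *ᵥ ((Φ * (Ψ * S * Φ)⁻¹ * Ψ) *ᵥ g) + B *ᵥ ξ = g ∧
      C *ᵥ ((Φ * (Ψ * S * Φ)⁻¹ * Ψ) *ᵥ g) = 0 := by
  have hproj : Ψ * S * (Φ * (Ψ * S * Φ)⁻¹ * Ψ) = Ψ := by
    rw [← Matrix.mul_assoc, ← Matrix.mul_assoc, mul_nonsing_inv _ hdet, Matrix.one_mul]
  have hres : Ψ *ᵥ (g - S *ᵥ ((Φ * (Ψ * S * Φ)⁻¹ * Ψ) *ᵥ g)) = 0 := by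
    rw [mulVec_sub, mulVec_mulVec, mulVec_mulVec, hproj, sub_self]
  obtain ⟨ξ, hξ⟩ := hΨ hres
  refine ⟨ξ, ?_, ?_⟩
  · rw [mulVecLin_apply] at hξ
    rw [hξ, add_sub_cancel]
  · rw [mulVec_mulVec, ← Matrix.mul_assoc, ← Matrix.mul_assoc, hC, Matrix.zero_mul,
      Matrix.zero_mul, zero_mulVec]

end Matrix

theorem saddle_point_dual_general (n_v n_p r : ℕ)
    (A12 : Matrix (Fin n_v) (Fin n_p) ℝ)
    (A21 : Matrix (Fin n_p) (Fin n_v) ℝ)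
    (φl θr : Matrix (Fin n_v) (Fin (n_v - n_p)) ℝ)
    (hφ : φl.transpose * A12 = 0)
    (hθ : LinearMap.ker θr.transpose.mulVecLin ≤ LinearMap.range A21.transpose.mulVecLin)
    (T : Matrix (Fin r × Fin n_v) (Fin r × Fin n_v) ℝ)
    (X : Matrix (Fin r × Fin (n_v - n_p)) (Fin r × Fin (n_v - n_p)) ℝ)
    (hX : X = ((1 : Matrix (Fin r) (Fin r) ℝ) ⊗ₖ φl.transpose) * T *
      ((1 : Matrix (Fin r) (Fin r) ℝ) ⊗ₖ θr))
    (hXunit : IsUnit X)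
    (g : Fin r × Fin n_v → ℝ) :
    ∃ ξw : Fin r × Fin n_p → ℝ,
      T.transpose.mulVec ((((1 : Matrix (Fin r) (Fin r) ℝ) ⊗ₖ φl) * (X.transpose)⁻¹ *
          ((1 : Matrix (Fin r) (Fin r) ℝ) ⊗ₖ θr.transpose)).mulVec g) +
        (((1 : Matrix (Fin r) (Fin r) ℝ) ⊗ₖ A21.transpose).mulVec ξw) = g ∧
      (((1 : Matrix (Fin r) (Fin r) ℝ) ⊗ₖ A12.transpose)).mulVec
        ((((1 : Matrix (Fin r) (Fin r) ℝ) ⊗ₖ φl) * (X.transpose)⁻¹ *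
          ((1 : Matrix (Fin r) (Fin r) ℝ) ⊗ₖ θr.transpose)).mulVec g) = 0 := by
  have hXT : Xᵀ = ((1 : Matrix (Fin r) (Fin r) ℝ) ⊗ₖ θrᵀ) * Tᵀ *
      ((1 : Matrix (Fin r) (Fin r) ℝ) ⊗ₖ φl) := by
    rw [hX, transpose_mul, transpose_mul, ← kroneckerMap_transpose, ← kroneckerMap_transpose,
      transpose_one, transpose_transpose, ← Matrix.mul_assoc]
  have hdet : IsUnit Xᵀ.det := by
    rwa [det_transpose, ← isUnit_iff_isUnit_det]
  have hC : ((1 : Matrix (Fin r) (Fin r) ℝ) ⊗ₖ A12ᵀ) *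
      ((1 : Matrix (Fin r) (Fin r) ℝ) ⊗ₖ φl) = 0 := by
    rw [← mul_kronecker_mul, ← transpose_transpose φl, ← transpose_mul, hφ, transpose_zero,
      kronecker_zero]
  rw [hXT] at hdet ⊢
  exact exists_saddle_point_solution_of_nullspace hC (ker_one_kronecker_le_range hθ) hdet g

theorem saddle_point_dual (n_v n_p r : ℕ) (hnv : 0 < n_v) (hnp : 0 < n_p) (hr : 0 < r)
    (hnp_le : n_p ≤ n_v)
    (A12 : Matrix (Fin n_v) (Fin n_p) ℝ)
    (A21 : Matrix (Fin n_p) (Fin n_v) ℝ)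
    (φl θr : Matrix (Fin n_v) (Fin (n_v - n_p)) ℝ)
    (hφ : φl.transpose * A12 = 0)
    (hθ : LinearMap.ker θr.transpose.mulVecLin ≤ LinearMap.range A21.transpose.mulVecLin)
    (T : Matrix (Fin r × Fin n_v) (Fin r × Fin n_v) ℝ)
    (X : Matrix (Fin r × Fin (n_v - n_p)) (Fin r × Fin (n_v - n_p)) ℝ)
    (hX : X = ((1 : Matrix (Fin r) (Fin r) ℝ) ⊗ₖ φl.transpose) * T *
      ((1 : Matrix (Fin r) (Fin r) ℝ) ⊗ₖ θr))
    (hXunit : IsUnit X)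
    (g : Fin r × Fin n_v → ℝ) :
    ∃ ξw : Fin r × Fin n_p → ℝ,
      T.transpose.mulVec ((((1 : Matrix (Fin r) (Fin r) ℝ) ⊗ₖ φl) * (X.transpose)⁻¹ *
          ((1 : Matrix (Fin r) (Fin r) ℝ) ⊗ₖ θr.transpose)).mulVec g) +
        (((1 : Matrix (Fin r) (Fin r) ℝ) ⊗ₖ A21.transpose).mulVec ξw) = g ∧
      (((1 : Matrix (Fin r) (Fin r) ℝ) ⊗ₖ A12.transpose)).mulVec
        ((((1 : Matrix (Fin r) (Fin r) ℝ) ⊗ₖ φl) * (X.transpose)⁻¹ *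
          ((1 : Matrix (Fin r) (Fin r) ℝ) ⊗ₖ θr.transpose)).mulVec g) = 0 :=
  saddle_point_dual_general n_v n_p r A12 A21 φl θr hφ hθ T X hX hXunit g
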